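/- arXiv:2307.09768 — 2 statements merged into one kernel-verified Lean document; each statement's English description precedes it below -/
import Mathlib

section
/- For every pair of adjacent vertices i, j of a finite connected simple graph in which every vertex has degree at least 1, the Ollivier–Ricci curvature satisfies κ(i,j) ≤ #(i,j)/max(d_i, d_j), where #(i,j) is the number of common neighbors of i and j (equivalently, the number of triangles of G containing the edge {i,j}). -/
/-!
Every coupling `Γ` of the two neighbourhood measures has total mass `1`, and in a connected graph
distinct vertices are at distance at least `1`, so the transport cost of `Γ` is at least the
off-diagonal mass `1 - ∑ u, Γ u u`. The diagonal entry `Γ u u` is bounded by both marginals at `u`,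
which vanish unless `u` is a common neighbour of `i` and `j` and are otherwise `1 / dᵢ` and `1 / dⱼ`.
Hence `∑ u, Γ u u ≤ #(i,j) / max dᵢ dⱼ`.
-/

open Finset

/-- The probability measure at node `i`: uniform on the neighbors of `i`. -/
noncomputable def massDist {V : Type*} [Fintype V] (G : SimpleGraph V)
    [DecidableRel G.Adj] (i u : V) : ℝ :=
  if G.Adj i u then 1 / (G.degree i : ℝ) else 0

/-- `Γ` is a coupling of the measures `massDist G i` and `massDist G j`. -/
def IsCoupling {V : Type*} [Fintype V] (G : SimpleGraph V) [DecidableRel G.Adj]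
    (i j : V) (Γ : V → V → ℝ) : Prop :=
  (∀ u v, 0 ≤ Γ u v) ∧
  (∀ u, ∑ v, Γ u v = massDist G i u) ∧
  (∀ v, ∑ u, Γ u v = massDist G j v)

/-- The L¹-Wasserstein distance between the neighborhood measures of `i` and `j`,
with respect to the shortest-path distance. -/
noncomputable def wassersteinW1 {V : Type*} [Fintype V] (G : SimpleGraph V)
    [DecidableRel G.Adj] (i j : V) : ℝ :=
  sInf { c : ℝ | ∃ Γ : V → V → ℝ, IsCoupling G i j Γ ∧
    c = ∑ u, ∑ v, Γ u v * (G.dist u v : ℝ) }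

/-- The Ollivier–Ricci curvature of the edge `{i, j}` (for adjacent `i`, `j`,
so that `d(i,j) = 1`). -/
noncomputable def ollivierRicci {V : Type*} [Fintype V] (G : SimpleGraph V)
    [DecidableRel G.Adj] (i j : V) : ℝ :=
  1 - wassersteinW1 G i j

lemma min_one_div_one_div {α : Type*} [Field α] [LinearOrder α] [IsStrictOrderedRing α]
    {a b : α} (ha : 0 < a) (hb : 0 < b) : min (1 / a) (1 / b) = 1 / max a b := by
  rcases le_total a b with h | h
  · rw [max_eq_right h, min_eq_right (one_div_le_one_div_of_le ha h)]
  · rw [max_eq_left h, min_eq_left (one_div_le_one_div_of_le hb h)]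

section

variable {V : Type*} [Fintype V] (G : SimpleGraph V) [DecidableRel G.Adj]

lemma massDist_nonneg (i u : V) : 0 ≤ massDist G i u := by
  unfold massDist; split <;> positivity

lemma sum_massDist {i : V} (hi : 0 < G.degree i) : ∑ u, massDist G i u = 1 := by
  have hne : (G.degree i : ℝ) ≠ 0 := by positivity
  simp only [massDist, sum_ite, sum_const_zero, add_zero, sum_const, nsmul_eq_mul]
  rw [← SimpleGraph.neighborFinset_eq_filter, SimpleGraph.card_neighborFinset_eq_degree]
  field_simp

lemma sum_min_massDist [DecidableEq V] (i j : V) :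
    ∑ u, min (massDist G i u) (massDist G j u) =
      ((G.neighborFinset i ∩ G.neighborFinset j).card : ℝ) /
        (max (G.degree i) (G.degree j) : ℝ) := by
  have hterm : ∀ u, min (massDist G i u) (massDist G j u) =
      if u ∈ G.neighborFinset i ∩ G.neighborFinset j then
        1 / (max (G.degree i) (G.degree j) : ℝ) else 0 := by
    intro u
    by_cases hiu : G.Adj i u
    · by_cases hju : G.Adj j u
      · have hdi : 0 < G.degree i := G.degree_pos_iff_exists_adj i |>.2 ⟨u, hiu⟩
        have hdj : 0 < G.degree j := G.degree_pos_iff_exists_adj j |>.2 ⟨u, hju⟩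
        simpa [massDist, hiu, hju] using min_one_div_one_div (α := ℝ) (mod_cast hdi) (mod_cast hdj)
      · simp [massDist, hiu, hju]
    · simpa [massDist, hiu] using massDist_nonneg G j u
  simp only [hterm, sum_ite_mem, univ_inter, sum_const, nsmul_eq_mul, mul_one_div]

lemma SimpleGraph.Connected.sum_sub_sum_diag_le_sum_mul_dist {V : Type*} [Fintype V]
    {G : SimpleGraph V} (hconn : G.Connected) {Γ : V → V → ℝ} (hΓ : ∀ u v, 0 ≤ Γ u v) :
    ∑ u, ∑ v, Γ u v - ∑ u, Γ u u ≤ ∑ u, ∑ v, Γ u v * (G.dist u v : ℝ) := by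
  classical
  have hpoint : ∀ u v, Γ u v ≤ Γ u v * (G.dist u v : ℝ) + if u = v then Γ u v else 0 := by
    intro u v
    by_cases huv : u = v
    · simp [huv]
    · have hdist : (1 : ℝ) ≤ G.dist u v := by exact_mod_cast hconn.pos_dist_of_ne huv
      simp only [huv, if_false, add_zero]
      nlinarith [hΓ u v]
  have hrow : ∀ u, ∑ v, Γ u v ≤ ∑ v, Γ u v * (G.dist u v : ℝ) + Γ u u := by
    intro u
    calc ∑ v, Γ u v ≤ ∑ v, (Γ u v * (G.dist u v : ℝ) + if u = v then Γ u v else 0) :=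
          sum_le_sum fun v _ => hpoint u v
      _ = ∑ v, Γ u v * (G.dist u v : ℝ) + Γ u u := by
          rw [sum_add_distrib, sum_ite_eq, if_pos (mem_univ u)]
  have := sum_le_sum fun u (_ : u ∈ univ) => hrow u
  rw [sum_add_distrib] at this
  linarith

namespace IsCoupling

variable {G} {i j : V} {Γ : V → V → ℝ}

lemma le_massDist_left (hΓ : IsCoupling G i j Γ) (u v : V) : Γ u v ≤ massDist G i u :=
  hΓ.2.1 u ▸ single_le_sum (fun w _ => hΓ.1 u w) (mem_univ v)

lemma le_massDist_right (hΓ : IsCoupling G i j Γ) (u v : V) : Γ u v ≤ massDist G j v :=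
  hΓ.2.2 v ▸ single_le_sum (fun w _ => hΓ.1 w v) (mem_univ u)

lemma sum_diag_le (hΓ : IsCoupling G i j Γ) :
    ∑ u, Γ u u ≤ ∑ u, min (massDist G i u) (massDist G j u) :=
  sum_le_sum fun u _ => le_min (hΓ.le_massDist_left u u) (hΓ.le_massDist_right u u)

lemma sum_sum_eq_one (hΓ : IsCoupling G i j Γ) (hi : 0 < G.degree i) :
    ∑ u, ∑ v, Γ u v = 1 := by
  simp only [hΓ.2.1, sum_massDist G hi]

lemma prod (hi : 0 < G.degree i) (hj : 0 < G.degree j) :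
    IsCoupling G i j fun u v => massDist G i u * massDist G j v :=
  ⟨fun u v => mul_nonneg (massDist_nonneg G i u) (massDist_nonneg G j v),
    fun u => by rw [← mul_sum, sum_massDist G hj, mul_one],
    fun v => by rw [← sum_mul, sum_massDist G hi, one_mul]⟩

end IsCoupling

lemma one_sub_sum_min_massDist_le_wassersteinW1 (hconn : G.Connected) {i j : V}
    (hi : 0 < G.degree i) (hj : 0 < G.degree j) :
    1 - ∑ u, min (massDist G i u) (massDist G j u) ≤ wassersteinW1 G i j := by
  refine le_csInf ⟨_, _, IsCoupling.prod hi hj, rfl⟩ ?_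
  rintro _ ⟨Γ, hΓ, rfl⟩
  have hcost := hconn.sum_sub_sum_diag_le_sum_mul_dist hΓ.1
  rw [hΓ.sum_sum_eq_one hi] at hcost
  linarith [hΓ.sum_diag_le]

end

theorem ollivierRicci_le_triangles_div_max_degree_general
    {V : Type*} [Fintype V] [DecidableEq V] (G : SimpleGraph V) [DecidableRel G.Adj]
    (hconn : G.Connected) (hdeg : ∀ v : V, 1 ≤ G.degree v)
    (i j : V) :
    ollivierRicci G i j ≤
      ((G.neighborFinset i ∩ G.neighborFinset j).card : ℝ) /
        (max (G.degree i) (G.degree j) : ℝ) := by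
  rw [ollivierRicci, ← sum_min_massDist]
  linarith [one_sub_sum_min_massDist_le_wassersteinW1 G hconn (hdeg i) (hdeg j)]

/-- Upper bound of the Ollivier–Ricci curvature by the number of triangles
containing the edge `{i,j}` divided by the maximum degree. -/
theorem ollivierRicci_le_triangles_div_max_degree
    {V : Type*} [Fintype V] [DecidableEq V] (G : SimpleGraph V) [DecidableRel G.Adj]
    (hconn : G.Connected) (hdeg : ∀ v : V, 1 ≤ G.degree v)
    (i j : V) (hij : G.Adj i j) :
    ollivierRicci G i j ≤
      ((G.neighborFinset i ∩ G.neighborFinset j).card : ℝ) /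
        (max (G.degree i) (G.degree j) : ℝ) :=
  ollivierRicci_le_triangles_div_max_degree_general G hconn hdeg i j
end

section
/- Let L̂ ∈ ℝ^{n×n} be symmetric with orthogonal eigendecomposition L̂ = Uᵀ diag(λ_1,…,λ_n) U (UᵀU = I) and all eigenvalues λ_i ∈ [0,2]. Assume 0 is a simple eigenvalue of L̂ with unit eigenvector u_0. Let W ∈ ℝ^{c×c} be symmetric and assume that max_k |λ_k^W| over the eigenvalues λ_k^W of W is attained only at a simple eigenvalue ω > 0 of W, with unit eigenvector φ. Fix θ ∈ [0,1), set g(λ) = cos²(λ/8) + θ sin²(λ/8), and define the spectral framelet propagation matrix M = W ⊗ (Uᵀ diag(g(λ_1),…,g(λ_n)) U) ∈ ℝ^{cn×cn}. Then for every x₀ ∈ ℝ^{cn} with ⟨x₀, φ ⊗ u_0⟩ ≠ 0, the normalized iterates M^m x₀ / ‖M^m x₀‖ converge as m → ∞ to a unit vector h_∞ ∈ {±(φ ⊗ u_0)} satisfying (I_c ⊗ L̂) h_∞ = 0; that is, the spectral Haar framelet convolution with high-pass coefficient θ ∈ [0,1) is low-frequency-dominant. -/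
open Matrix Kronecker Filter

/-- The Euclidean norm of a vector indexed by a finite type. -/
noncomputable def euclNorm {ι : Type*} [Fintype ι] (x : ι → ℝ) : ℝ :=
  Real.sqrt (x ⬝ᵥ x)

/-- Kronecker (tensor) product of two vectors. -/
def vecKron {ι κ : Type*} (φ : ι → ℝ) (u : κ → ℝ) : ι × κ → ℝ :=
  fun p => φ p.1 * u p.2

section Aux
variable {ι κ : Type*} [Fintype ι] [Fintype κ] [DecidableEq ι] [DecidableEq κ]
set_option linter.unusedSectionVars false

lemma vecKron_dot (a a' : ι → ℝ) (b b' : κ → ℝ) :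
    vecKron a b ⬝ᵥ vecKron a' b' = (a ⬝ᵥ a') * (b ⬝ᵥ b') := by
  simp only [dotProduct, vecKron, Fintype.sum_prod_type, Finset.sum_mul_sum]
  apply Finset.sum_congr rfl; intro i _
  apply Finset.sum_congr rfl; intro j _
  ring

lemma kron_mulVec (A : Matrix ι ι ℝ) (B : Matrix κ κ ℝ) (x : ι → ℝ) (y : κ → ℝ) :
    (A ⊗ₖ B) *ᵥ vecKron x y = vecKron (A *ᵥ x) (B *ᵥ y) := by
  funext p
  simp only [mulVec, dotProduct, vecKron, kroneckerMap_apply, Fintype.sum_prod_type,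
    Finset.sum_mul_sum]
  apply Finset.sum_congr rfl; intro i _
  apply Finset.sum_congr rfl; intro j _
  ring

lemma vecKron_neg_left (x : ι → ℝ) (y : κ → ℝ) : vecKron (-x) y = -vecKron x y := by
  funext p; simp [vecKron]

lemma vecKron_neg_right (x : ι → ℝ) (y : κ → ℝ) : vecKron x (-y) = -vecKron x y := by
  funext p; simp [vecKron]

lemma row_dot_row (B : Matrix ι ι ℝ) (hB : B * Bᵀ = 1) (k l : ι) :
    B k ⬝ᵥ B l = if k = l then (1:ℝ) else 0 := by
  have := congrFun (congrFun hB k) l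
  simpa [Matrix.mul_apply, Matrix.one_apply, dotProduct, Matrix.transpose_apply] using this

lemma orth_dot (B : Matrix ι ι ℝ) (hB : B * Bᵀ = 1) (v w : ι → ℝ) :
    (Bᵀ *ᵥ v) ⬝ᵥ (Bᵀ *ᵥ w) = v ⬝ᵥ w := by
  rw [dotProduct_comm, dotProduct_mulVec, vecMul_transpose, mulVec_mulVec, hB, one_mulVec,
    dotProduct_comm]

lemma row_eigen (A B : Matrix ι ι ℝ) (d : ι → ℝ)
    (hA : A = Bᵀ * Matrix.diagonal d * B) (hB : B * Bᵀ = 1) (k : ι) :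
    A *ᵥ B k = d k • B k := by
  have hrow : Bᵀ *ᵥ Pi.single k 1 = B k := by
    funext l; simp [Matrix.mulVec_single]
  calc A *ᵥ B k = (A * Bᵀ) *ᵥ Pi.single k 1 := by rw [← mulVec_mulVec, hrow]
    _ = (Bᵀ * Matrix.diagonal d) *ᵥ Pi.single k 1 := by
        rw [hA, mul_assoc, mul_assoc, hB, mul_one]
    _ = Bᵀ *ᵥ (Matrix.diagonal d *ᵥ Pi.single k 1) := by rw [← mulVec_mulVec]
    _ = Bᵀ *ᵥ Pi.single k (d k * 1) := by rw [Matrix.diagonal_mulVec_single]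
    _ = d k • B k := by
        rw [mul_one, ← hrow]
        funext l
        simp [Matrix.mulVec_single, mul_comm]

lemma exists_eigen_index (A B : Matrix ι ι ℝ) (d : ι → ℝ)
    (hA : A = Bᵀ * Matrix.diagonal d * B) (hB : B * Bᵀ = 1)
    (v : ι → ℝ) (hv : v ⬝ᵥ v = 1) (t : ℝ) (hev : A *ᵥ v = t • v) :
    ∃ k, d k = t := by
  have hBtB : Bᵀ * B = 1 := mul_eq_one_comm.mp hB
  set w := B *ᵥ v with hw
  have hvne : v ≠ 0 := by
    intro h; rw [h] at hv; simp at hv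
  have hwne : w ≠ 0 := by
    intro h
    apply hvne
    have : Bᵀ *ᵥ w = v := by rw [hw, mulVec_mulVec, hBtB, one_mulVec]
    rw [h, mulVec_zero] at this; exact this.symm
  have hDw : Matrix.diagonal d *ᵥ w = t • w := by
    have h1 : (B * A) *ᵥ v = Matrix.diagonal d *ᵥ w := by
      rw [hA, ← mul_assoc, ← mul_assoc, hB, one_mul, hw, mulVec_mulVec]
    have h2 : (B * A) *ᵥ v = t • w := by
      rw [← mulVec_mulVec, hev, mulVec_smul]
    rw [← h1, h2]
  obtain ⟨k, hk⟩ := Function.ne_iff.mp hwne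
  refine ⟨k, ?_⟩
  have h3 : d k * w k = t * w k := by
    have := congrFun hDw k
    rwa [Matrix.mulVec_diagonal, Pi.smul_apply, smul_eq_mul] at this
  exact mul_right_cancel₀ hk h3

lemma euclNorm_smul (t : ℝ) (x : ι → ℝ) : euclNorm (t • x) = |t| * euclNorm x := by
  unfold euclNorm
  rw [smul_dotProduct, dotProduct_smul, smul_eq_mul, smul_eq_mul, ← mul_assoc, ← sq,
    Real.sqrt_mul (sq_nonneg t), Real.sqrt_sq_eq_abs]

lemma dot_self_nonneg (x : ι → ℝ) : 0 ≤ x ⬝ᵥ x :=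
  Finset.sum_nonneg fun i _ => mul_self_nonneg (x i)

lemma abs_apply_le_euclNorm (x : ι → ℝ) (q : ι) : |x q| ≤ euclNorm x := by
  rw [← Real.sqrt_sq_eq_abs]
  apply Real.sqrt_le_sqrt
  rw [sq]
  exact Finset.single_le_sum (f := fun i => x i * x i)
    (fun i _ => mul_self_nonneg (x i)) (Finset.mem_univ q)

lemma continuous_euclNorm : Continuous (euclNorm (ι := ι)) := by
  unfold euclNorm dotProduct
  exact Real.continuous_sqrt.comp <| continuous_finset_sum _
    fun i _ => (continuous_apply i).mul (continuous_apply i)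

lemma euclNorm_eq_one_iff (x : ι → ℝ) : euclNorm x = 1 ↔ x ⬝ᵥ x = 1 := by
  unfold euclNorm
  constructor
  · intro h
    have := congrArg (· ^ 2) h
    simpa [Real.sq_sqrt (dot_self_nonneg x)] using this
  · intro h; rw [h, Real.sqrt_one]

end Aux


set_option maxHeartbeats 2000000 in
/-- The spectral Haar framelet convolution with high-pass coefficient `θ ∈ [0, 1)` is
low-frequency-dominant: the normalized iterates converge to `±(φ ⊗ u_0)`, a vector
in the kernel of `I_c ⊗ L̂`. -/
theorem spectral_haar_framelet_LFD
    {n c : ℕ} (Lhat : Matrix (Fin n) (Fin n) ℝ)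
    (U : Matrix (Fin n) (Fin n) ℝ) (lam : Fin n → ℝ)
    (hU : Uᵀ * U = 1) (hL : Lhat = Uᵀ * Matrix.diagonal lam * U)
    (hlam : ∀ i, lam i ∈ Set.Icc (0 : ℝ) 2)
    (u₀ : Fin n → ℝ) (hu₀eig : Lhat *ᵥ u₀ = 0) (hu₀unit : euclNorm u₀ = 1)
    (h0simple : ∀ v : Fin n → ℝ, Lhat *ᵥ v = 0 → ∃ t : ℝ, v = t • u₀)
    (W : Matrix (Fin c) (Fin c) ℝ) (hW : W.IsSymm)
    (ω : ℝ) (hωpos : 0 < ω)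
    (φ : Fin c → ℝ) (hφeig : W *ᵥ φ = ω • φ) (hφunit : euclNorm φ = 1)
    (hωsimple : ∀ v : Fin c → ℝ, W *ᵥ v = ω • v → ∃ t : ℝ, v = t • φ)
    (hωdom : ∀ ν : ℝ, (∃ v : Fin c → ℝ, v ≠ 0 ∧ W *ᵥ v = ν • v) → ν ≠ ω → |ν| < ω)
    (θ : ℝ) (hθ0 : 0 ≤ θ) (hθ1 : θ < 1)
    (M : Matrix (Fin c × Fin n) (Fin c × Fin n) ℝ)
    (hM : M = W ⊗ₖ
      (Uᵀ * Matrix.diagonal (fun i =>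
        Real.cos (lam i / 8) ^ 2 + θ * Real.sin (lam i / 8) ^ 2) * U))
    (x₀ : Fin c × Fin n → ℝ) (hx₀ : x₀ ⬝ᵥ vecKron φ u₀ ≠ 0) :
    ∃ hinf : Fin c × Fin n → ℝ,
      (hinf = vecKron φ u₀ ∨ hinf = -vecKron φ u₀) ∧
      ((1 : Matrix (Fin c) (Fin c) ℝ) ⊗ₖ Lhat) *ᵥ hinf = 0 ∧
      Tendsto (fun m : ℕ => (euclNorm ((M ^ m) *ᵥ x₀))⁻¹ • ((M ^ m) *ᵥ x₀))
        atTop (nhds hinf) := by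
  classical
  have hφφ : φ ⬝ᵥ φ = 1 := (euclNorm_eq_one_iff φ).mp hφunit
  have hu₀u₀ : u₀ ⬝ᵥ u₀ = 1 := (euclNorm_eq_one_iff u₀).mp hu₀unit
  have hUU : U * Uᵀ = 1 := mul_eq_one_comm.mp hU
  -- spectral theorem for W
  have hW' : W.IsHermitian := by
    rw [Matrix.IsHermitian, Matrix.conjTranspose_eq_transpose_of_trivial]; exact hW
  set ν : Fin c → ℝ := hW'.eigenvalues with hν
  set P : Matrix (Fin c) (Fin c) ℝ := (hW'.eigenvectorUnitary : Matrix (Fin c) (Fin c) ℝ)ᵀ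
    with hP
  have hstar : star (hW'.eigenvectorUnitary : Matrix (Fin c) (Fin c) ℝ) = P := by
    rw [hP, Matrix.star_eq_conjTranspose, Matrix.conjTranspose_eq_transpose_of_trivial]
  have hPP : P * Pᵀ = 1 := by
    have hVV : star (hW'.eigenvectorUnitary : Matrix (Fin c) (Fin c) ℝ) *
        (hW'.eigenvectorUnitary : Matrix (Fin c) (Fin c) ℝ) = 1 :=
      Unitary.coe_star_mul_self _
    rw [hstar] at hVV
    have hPt : Pᵀ = (hW'.eigenvectorUnitary : Matrix (Fin c) (Fin c) ℝ) := by
      rw [hP, transpose_transpose]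
    rw [hPt]
    exact hVV
  have hWspec : W = Pᵀ * Matrix.diagonal ν * P := by
    have h := hW'.spectral_theorem
    rw [Unitary.conjStarAlgAut_apply] at h
    rw [hstar] at h
    have hV : (hW'.eigenvectorUnitary : Matrix (Fin c) (Fin c) ℝ) = Pᵀ := by
      rw [hP, transpose_transpose]
    rw [hV] at h
    simpa [RCLike.ofReal_real_eq_id, Function.id_comp] using h
  set g : Fin n → ℝ := fun i => Real.cos (lam i / 8) ^ 2 + θ * Real.sin (lam i / 8) ^ 2 with hg
  set Q : Matrix (Fin c × Fin n) (Fin c × Fin n) ℝ := P ⊗ₖ U with hQdef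
  set μ : Fin c × Fin n → ℝ := fun p => ν p.1 * g p.2 with hμ
  have hQt : Qᵀ = Pᵀ ⊗ₖ Uᵀ := by
    rw [hQdef]; exact (Matrix.kroneckerMap_transpose _ _ _).symm
  have hQQ : Q * Qᵀ = 1 := by
    rw [hQt, hQdef, ← Matrix.mul_kronecker_mul, hPP, hUU, Matrix.one_kronecker_one]
  have hMspec : M = Qᵀ * Matrix.diagonal μ * Q := by
    rw [hM, hWspec, hQt, hQdef, Matrix.mul_kronecker_mul, Matrix.mul_kronecker_mul,
      Matrix.diagonal_kronecker_diagonal, hμ]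
  have hmulQ : ∀ X Y : Matrix (Fin c × Fin n) (Fin c × Fin n) ℝ,
      (Qᵀ * X * Q) * (Qᵀ * Y * Q) = Qᵀ * (X * Y) * Q := by
    intro X Y
    calc (Qᵀ * X * Q) * (Qᵀ * Y * Q) = Qᵀ * X * (Q * Qᵀ) * (Y * Q) := by
          simp only [Matrix.mul_assoc]
      _ = Qᵀ * (X * Y) * Q := by rw [hQQ, Matrix.mul_one]; simp only [Matrix.mul_assoc]
  have hMm : ∀ m : ℕ, M ^ m = Qᵀ * Matrix.diagonal (fun p => μ p ^ m) * Q := by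
    intro m
    induction m with
    | zero =>
        rw [pow_zero]
        have hd1 : Matrix.diagonal (fun p : Fin c × Fin n => μ p ^ 0) = 1 := by
          rw [show (fun p : Fin c × Fin n => μ p ^ 0) = fun _ => (1:ℝ) from
            funext fun p => pow_zero _, Matrix.diagonal_one]
        rw [hd1, Matrix.mul_one]
        exact (mul_eq_one_comm.mp hQQ).symm
    | succ m ih =>
        rw [pow_succ, ih, hMspec, hmulQ, Matrix.diagonal_mul_diagonal]
        have hfun : (fun p : Fin c × Fin n => μ p ^ m * μ p) = fun p => μ p ^ (m+1) :=
          funext fun p => (pow_succ _ _).symm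
        rw [hfun]
  -- eigen rows
  have hWrow : ∀ k, W *ᵥ P k = ν k • P k := fun k => row_eigen W P ν hWspec hPP k
  have hLrow : ∀ i, Lhat *ᵥ U i = lam i • U i := fun i => row_eigen Lhat U lam hL hUU i
  have hProw1 : ∀ k, P k ⬝ᵥ P k = 1 := by
    intro k; rw [row_dot_row P hPP]; simp
  have hUrow1 : ∀ i, U i ⬝ᵥ U i = 1 := by
    intro i; rw [row_dot_row U hUU]; simp
  have hνle : ∀ k, ν k = ω ∨ |ν k| < ω := by
    intro k
    by_cases h : ν k = ω
    · exact Or.inl h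
    · refine Or.inr (hωdom (ν k) ⟨P k, ?_, hWrow k⟩ h)
      intro h0
      have := hProw1 k
      rw [h0] at this
      simp at this
  have hg0 : ∀ i, 0 ≤ g i := fun i => add_nonneg (sq_nonneg _) (mul_nonneg hθ0 (sq_nonneg _))
  have hg1 : ∀ i, g i ≤ 1 := by
    intro i
    have hs := Real.sin_sq_add_cos_sq (lam i / 8)
    have := sq_nonneg (Real.sin (lam i / 8))
    simp only [hg]
    nlinarith
  have hgeq1 : ∀ i, g i = 1 → lam i = 0 := by
    intro i hgi
    have hs := Real.sin_sq_add_cos_sq (lam i / 8)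
    simp only [hg] at hgi
    have hx : Real.sin (lam i / 8) ^ 2 * (1 - θ) = 0 := by linear_combination hs - hgi
    have hsin : Real.sin (lam i / 8) = 0 := by
      rcases mul_eq_zero.mp hx with h | h
      · exact pow_eq_zero_iff two_ne_zero |>.mp h
      · linarith
    by_contra hne
    have h1 : 0 < lam i := lt_of_le_of_ne (hlam i).1 (Ne.symm hne)
    have h2 : lam i / 8 < Real.pi := by
      have := (hlam i).2
      have := Real.pi_gt_three
      linarith
    have := Real.sin_pos_of_pos_of_lt_pi (by linarith : 0 < lam i / 8) h2
    linarith
  have hlam0g : ∀ i, lam i = 0 → g i = 1 := by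
    intro i h
    simp only [hg, h]
    norm_num
  -- classification of top eigenvectors
  have hPk_eq : ∀ k, ν k = ω → P k = φ ∨ P k = -φ := by
    intro k hk
    obtain ⟨t, ht⟩ := hωsimple (P k) (by rw [hWrow k, hk])
    have htt : t * t = 1 := by
      have h1 := hProw1 k
      rw [ht, smul_dotProduct, dotProduct_smul, hφφ] at h1
      simpa using h1
    rcases mul_self_eq_one_iff.mp htt with h | h
    · left; rw [ht, h, one_smul]
    · right; rw [ht, h, neg_one_smul]
  have hUi_eq : ∀ i, lam i = 0 → U i = u₀ ∨ U i = -u₀ := by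
    intro i hi
    obtain ⟨t, ht⟩ := h0simple (U i) (by rw [hLrow i, hi, zero_smul])
    have htt : t * t = 1 := by
      have h1 := hUrow1 i
      rw [ht, smul_dotProduct, dotProduct_smul, hu₀u₀] at h1
      simpa using h1
    rcases mul_self_eq_one_iff.mp htt with h | h
    · left; rw [ht, h, one_smul]
    · right; rw [ht, h, neg_one_smul]
  -- the top index
  obtain ⟨k₀, hk₀⟩ : ∃ k, ν k = ω := exists_eigen_index W P ν hWspec hPP φ hφφ ω hφeig
  obtain ⟨i₀, hi₀⟩ : ∃ i, lam i = 0 :=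
    exists_eigen_index Lhat U lam hL hUU u₀ hu₀u₀ 0 (by rw [hu₀eig, zero_smul])
  set p₀ : Fin c × Fin n := (k₀, i₀) with hp₀
  have hμp₀ : μ p₀ = ω := by
    simp only [hμ, hp₀]
    rw [hlam0g i₀ hi₀ , hk₀, mul_one]
  have hQrow : ∀ p : Fin c × Fin n, Q p = vecKron (P p.1) (U p.2) := by
    intro p; rw [hQdef]; funext q; rfl
  set e : Fin c × Fin n → ℝ := vecKron φ u₀ with he
  have hee : e ⬝ᵥ e = 1 := by rw [he, vecKron_dot, hφφ, hu₀u₀, mul_one]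
  have hkronsmul : ∀ (x : Fin c → ℝ) (y : Fin n → ℝ) (s t : ℝ),
      vecKron (s • x) (t • y) = (s * t) • vecKron x y := by
    intro x y s t; funext p; simp [vecKron]; ring
  obtain ⟨ε, hε1, hεQ⟩ : ∃ ε : ℝ, ε * ε = 1 ∧ Q p₀ = ε • e := by
    have hr : Q p₀ = vecKron (P k₀) (U i₀) := hQrow p₀
    rcases hPk_eq k₀ hk₀ with h1 | h1 <;> rcases hUi_eq i₀ hi₀ with h2 | h2
    · exact ⟨1, by norm_num, by rw [hr, h1, h2, one_smul]⟩
    · exact ⟨-1, by norm_num, by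
        rw [hr, h1, h2, vecKron_neg_right, neg_one_smul]⟩
    · exact ⟨-1, by norm_num, by
        rw [hr, h1, h2, vecKron_neg_left, neg_one_smul]⟩
    · exact ⟨1, by norm_num, by
        rw [hr, h1, h2, vecKron_neg_left, vecKron_neg_right, neg_neg, one_smul]⟩
  -- spectral gap: all other eigenvalues are strictly smaller in absolute value
  have hμle : ∀ p : Fin c × Fin n, p ≠ p₀ → |μ p| < ω := by
    intro p hp
    by_contra hge
    push_neg at hge
    have hνabs : |ν p.1| ≤ ω := by
      rcases hνle p.1 with h | h
      · rw [h, abs_of_pos hωpos]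
      · exact h.le
    have habs : |μ p| = |ν p.1| * g p.2 := by
      rw [hμ, abs_mul, abs_of_nonneg (hg0 p.2)]
    have h1 : |ν p.1| * g p.2 ≤ |ν p.1| * 1 :=
      mul_le_mul_of_nonneg_left (hg1 p.2) (abs_nonneg _)
    have hνeq : ν p.1 = ω := by
      rcases hνle p.1 with h | h
      · exact h
      · exfalso; rw [habs] at hge; nlinarith
    have hgeq : g p.2 = 1 := by
      rw [habs, hνeq, abs_of_pos hωpos] at hge
      nlinarith [hg1 p.2]
    have hl0 : lam p.2 = 0 := hgeq1 _ hgeq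
    -- identify the row with ±e
    have hr : Q p = vecKron (P p.1) (U p.2) := hQrow p
    have hQp : ∃ ε' : ℝ, ε' * ε' = 1 ∧ Q p = ε' • e := by
      rcases hPk_eq p.1 hνeq with h1' | h1' <;> rcases hUi_eq p.2 hl0 with h2' | h2'
      · exact ⟨1, by norm_num, by rw [hr, h1', h2', one_smul]⟩
      · exact ⟨-1, by norm_num, by rw [hr, h1', h2', vecKron_neg_right, neg_one_smul]⟩
      · exact ⟨-1, by norm_num, by rw [hr, h1', h2', vecKron_neg_left, neg_one_smul]⟩
      · exact ⟨1, by norm_num, by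
          rw [hr, h1', h2', vecKron_neg_left, vecKron_neg_right, neg_neg, one_smul]⟩
    obtain ⟨ε', hε'1, hε'Q⟩ := hQp
    have horth : Q p ⬝ᵥ Q p₀ = 0 := by
      have h := row_dot_row Q hQQ p p₀
      rwa [if_neg hp] at h
    rw [hε'Q, hεQ, smul_dotProduct, dotProduct_smul, hee] at horth
    -- ε' * (ε * 1) = 0 contradicts ε'ε = ±1
    simp only [smul_eq_mul, mul_one] at horth
    nlinarith [hε1, hε'1]
  -- the spectral radius on the complement
  have hneU : (Finset.univ : Finset (Fin c × Fin n)).Nonempty := ⟨p₀, Finset.mem_univ _⟩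
  set ρ : ℝ := Finset.univ.sup' hneU (fun p => if p = p₀ then 0 else |μ p|) with hρ
  have hρ0 : 0 ≤ ρ := by
    rw [hρ]
    exact le_trans (le_of_eq (if_pos rfl).symm)
      (Finset.le_sup' (fun p => if p = p₀ then 0 else |μ p|) (Finset.mem_univ p₀))
  have hρω : ρ < ω := by
    rw [hρ]
    rw [Finset.sup'_lt_iff]
    intro p _
    by_cases hp : p = p₀
    · rw [if_pos hp]; exact hωpos
    · rw [if_neg hp]; exact hμle p hp
  have hμρ : ∀ p, p ≠ p₀ → |μ p| ≤ ρ := by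
    intro p hp
    rw [hρ]
    exact le_trans (le_of_eq (if_neg hp).symm)
      (Finset.le_sup' (fun p => if p = p₀ then 0 else |μ p|) (Finset.mem_univ p))
  -- coordinates of x₀
  set cv : Fin c × Fin n → ℝ := Q *ᵥ x₀ with hcv
  set a : ℝ := x₀ ⬝ᵥ e with ha
  have hane : a ≠ 0 := hx₀
  have hcvp₀ : cv p₀ = ε * a := by
    have h1 : cv p₀ = Q p₀ ⬝ᵥ x₀ := rfl
    rw [h1, hεQ, smul_dotProduct, smul_eq_mul, dotProduct_comm e x₀, ← ha]
  -- decomposition of the iterates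
  set z : ℕ → (Fin c × Fin n → ℝ) :=
    fun m => Qᵀ *ᵥ (fun p => if p = p₀ then 0 else μ p ^ m * cv p) with hz
  have hsum : ∀ m : ℕ, (M ^ m) *ᵥ x₀ = (ω ^ m * a) • e + z m := by
    intro m
    have h1 : (M ^ m) *ᵥ x₀ = Qᵀ *ᵥ (fun p => μ p ^ m * cv p) := by
      have hdg : (Matrix.diagonal (fun p => μ p ^ m)) *ᵥ cv = fun p => μ p ^ m * cv p := by
        funext p; rw [Matrix.mulVec_diagonal]
      rw [hMm m, ← Matrix.mulVec_mulVec, ← Matrix.mulVec_mulVec, ← hcv, hdg]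
    rw [h1]
    have hsplit : (fun p => μ p ^ m * cv p) =
        Pi.single p₀ (μ p₀ ^ m * cv p₀) + (fun p => if p = p₀ then 0 else μ p ^ m * cv p) := by
      funext p
      by_cases hp : p = p₀
      · subst hp; simp
      · simp [hp, Pi.single_apply]
    rw [hsplit, Matrix.mulVec_add, hz]
    congr 1
    rw [Matrix.mulVec_single]
    funext q
    have hq : Qᵀ q p₀ = ε * e q := by
      rw [Matrix.transpose_apply, hεQ]; rfl
    rw [Pi.smul_apply, MulOpposite.smul_eq_mul_unop, MulOpposite.unop_op]
    change Qᵀ q p₀ * _ = _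
    simp only [hq, hμp₀, hcvp₀, Pi.smul_apply, smul_eq_mul]
    linear_combination (ω ^ m * a * e q) * hε1
  -- norm bound on the tail
  have htail : ∀ m : ℕ, euclNorm (z m) ≤ ρ ^ m * euclNorm x₀ := by
    intro m
    set d : Fin c × Fin n → ℝ := fun p => if p = p₀ then 0 else μ p ^ m * cv p with hd
    have h1 : (Qᵀ *ᵥ d) ⬝ᵥ (Qᵀ *ᵥ d) = d ⬝ᵥ d := orth_dot Q hQQ d d
    have h3 : cv ⬝ᵥ cv = x₀ ⬝ᵥ x₀ := by
      have h := orth_dot Qᵀ (by rw [transpose_transpose]; exact mul_eq_one_comm.mp hQQ) x₀ x₀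
      rw [transpose_transpose] at h
      rw [hcv]; exact h
    have h2 : d ⬝ᵥ d ≤ (ρ ^ m) ^ 2 * (cv ⬝ᵥ cv) := by
      rw [dotProduct, dotProduct, Finset.mul_sum]
      apply Finset.sum_le_sum
      intro p _
      by_cases hp : p = p₀
      · simp only [hd, if_pos hp]
        have h0 : (0:ℝ) ≤ (ρ ^ m) ^ 2 * (cv p * cv p) :=
          mul_nonneg (sq_nonneg _) (mul_self_nonneg _)
        simpa using h0
      · simp only [hd, if_neg hp]
        have habs : |μ p ^ m| ≤ ρ ^ m := by
          rw [abs_pow]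
          exact pow_le_pow_left₀ (abs_nonneg _) (hμρ p hp) m
        have hkey : (μ p ^ m) ^ 2 ≤ (ρ ^ m) ^ 2 := by
          have h := abs_le.mp habs
          nlinarith [h.1, h.2]
        nlinarith [hkey, mul_self_nonneg (cv p)]
    have h4 : euclNorm (z m) = Real.sqrt ((Qᵀ *ᵥ d) ⬝ᵥ (Qᵀ *ᵥ d)) := rfl
    rw [h4, h1]
    calc Real.sqrt (d ⬝ᵥ d) ≤ Real.sqrt ((ρ ^ m) ^ 2 * (x₀ ⬝ᵥ x₀)) := by
          apply Real.sqrt_le_sqrt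
          rw [← h3]
          exact h2
      _ = ρ ^ m * euclNorm x₀ := by
          rw [Real.sqrt_mul (sq_nonneg _), Real.sqrt_sq (pow_nonneg hρ0 m)]
          rfl
  -- the normalized sequence
  set v : ℕ → (Fin c × Fin n → ℝ) := fun m => a • e + (ω ^ m)⁻¹ • z m with hv
  have hωm : ∀ m : ℕ, (ω : ℝ) ^ m ≠ 0 := fun m => pow_ne_zero m hωpos.ne'
  have hMx : ∀ m, (M ^ m) *ᵥ x₀ = (ω ^ m) • v m := by
    intro m
    rw [hsum m]
    simp only [hv]
    rw [smul_add, smul_smul, smul_smul, mul_inv_cancel₀ (hωm m), one_smul]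
  have hvlim : Tendsto v atTop (nhds (a • e)) := by
    rw [tendsto_pi_nhds]
    intro q
    have hzero : Tendsto (fun m => (ω ^ m)⁻¹ * z m q) atTop (nhds 0) := by
      apply squeeze_zero_norm (a := fun m => (ρ / ω) ^ m * euclNorm x₀)
      · intro m
        have h1 : |z m q| ≤ ρ ^ m * euclNorm x₀ :=
          le_trans (abs_apply_le_euclNorm _ q) (htail m)
        have h2 : ‖(ω ^ m)⁻¹ * z m q‖ = (ω ^ m)⁻¹ * |z m q| := by
          rw [Real.norm_eq_abs, abs_mul, abs_inv, abs_pow, abs_of_pos hωpos]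
        rw [h2]
        calc (ω ^ m)⁻¹ * |z m q| ≤ (ω ^ m)⁻¹ * (ρ ^ m * euclNorm x₀) := by
              apply mul_le_mul_of_nonneg_left h1 (by positivity)
          _ = (ρ / ω) ^ m * euclNorm x₀ := by
              rw [div_pow, div_eq_mul_inv]; ring
      · have h0 : Tendsto (fun m : ℕ => (ρ / ω) ^ m) atTop (nhds 0) :=
          tendsto_pow_atTop_nhds_zero_of_lt_one (div_nonneg hρ0 hωpos.le)
            ((div_lt_one hωpos).mpr hρω)
        simpa using h0.mul_const (euclNorm x₀)
    have hcoord : ∀ m, v m q = a * e q + (ω ^ m)⁻¹ * z m q := by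
      intro m; rw [hv]; simp
    have hlim : Tendsto (fun m => a * e q + (ω ^ m)⁻¹ * z m q) atTop (nhds (a * e q + 0)) :=
      tendsto_const_nhds.add hzero
    rw [add_zero] at hlim
    have : (a • e) q = a * e q := rfl
    rw [this]
    exact hlim.congr (fun m => (hcoord m).symm)
  -- unit vectors and continuity
  have heunit : euclNorm e = 1 := (euclNorm_eq_one_iff e).mpr hee
  have haee : euclNorm (a • e) = |a| := by rw [euclNorm_smul, heunit, mul_one]
  have hLne : euclNorm (a • e) ≠ 0 := by rw [haee]; exact abs_ne_zero.mpr hane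
  have hcontF : ContinuousAt (fun x : Fin c × Fin n → ℝ => (euclNorm x)⁻¹ • x) (a • e) :=
    ((continuous_euclNorm.continuousAt).inv₀ hLne).smul continuousAt_id
  have hcomp : Tendsto (fun m => (euclNorm (v m))⁻¹ • v m) atTop
      (nhds ((euclNorm (a • e))⁻¹ • (a • e))) := hcontF.tendsto.comp hvlim
  have hEq : ∀ m, (euclNorm ((M ^ m) *ᵥ x₀))⁻¹ • ((M ^ m) *ᵥ x₀) =
      (euclNorm (v m))⁻¹ • v m := by
    intro m
    rw [hMx m, euclNorm_smul, abs_of_pos (pow_pos hωpos m), smul_smul, mul_inv,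
      mul_comm ((ω ^ m)⁻¹) _, mul_assoc, inv_mul_cancel₀ (hωm m), mul_one]
  -- the limit vector
  set s : ℝ := |a|⁻¹ * a with hs
  have hs1 : s = 1 ∨ s = -1 := by
    rcases lt_or_gt_of_ne hane with h | h
    · right; rw [hs, abs_of_neg h]; field_simp
    · left; rw [hs, abs_of_pos h]; field_simp
  have hlimval : (euclNorm (a • e))⁻¹ • (a • e) = s • e := by
    rw [haee, smul_smul, hs]
  refine ⟨s • e, ?_, ?_, ?_⟩
  · rcases hs1 with h | h
    · left; rw [h, one_smul, he]
    · right; rw [h, neg_one_smul, he]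
  · have hker : ((1 : Matrix (Fin c) (Fin c) ℝ) ⊗ₖ Lhat) *ᵥ e = 0 := by
      rw [he, kron_mulVec, Matrix.one_mulVec, hu₀eig]
      funext p; simp [vecKron]
    rw [Matrix.mulVec_smul, hker, smul_zero]
  · rw [← hlimval]
    exact hcomp.congr (fun m => (hEq m).symm)
end
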